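/- arXiv:2102.07573 — 2 statements merged into one kernel-verified Lean document; each statement's English description precedes it below -/
import Mathlib

section
/- Let E be an elliptic curve defined over a number field K by a Weierstrass equation, with division polynomials ψ_n and the polynomials φ_n = xψ_n² − ψ_{n+1}ψ_{n−1}, regarded as polynomials in x alone. Then for all positive integers n, m one has the polynomial identity (φ_m(x)·ψ_n²(x) − φ_n(x)·ψ_m²(x))² = ψ_{n+m}²(x)·ψ_{|n−m|}²(x). -/
open WeierstrassCurve Polynomial

/-!
The bivariate `φₙ = xψₙ² - ψₙ₊₁ψₙ₋₁` satisfy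
`φₘψₙ² - φₙψₘ² = ψₙ₊₁ψₙ₋₁ψₘ² - ψₘ₊₁ψₘ₋₁ψₙ²`, which is `ψₙ₊ₘψₙ₋ₘ` by the elliptic relation
`W(x+y)W(x-y) = W(x+1)W(x-1)W(y)² - W(y+1)W(y-1)W(x)²` for `W = ψ`. Modulo the curve
equation `φₙ ≡ Φₙ` and `ψₙ² ≡ ΨSqₙ`, and `K[X]` embeds in the coordinate ring, so squaring
gives the claim.

The elliptic relation holds for every odd sequence `W` in a domain with `W(0) = 0`, `W(1) = 1`,
`W(n) ≠ 0` for `n ≠ 0`, satisfying the even and odd recurrences of division polynomials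
(its instances `y = x - 2` and `y = x - 1`). For `x ≥ y ≥ 0` one inducts on `x + y`:
writing `x, y` as `t ± e` or as `t + f + 1, t - f`, the relation at `(x, y)` times `W(2)²`
is a combination of relations with smaller `x + y` and of the recurrences at `t` and `e`
(resp. `f`). Nonvanishing of `ψₙ` in characteristic zero comes from the leading coefficient
`n²` of `ΨSqₙ`.
-/

namespace IsEllipticNet
variable {R : Type*} [CommRing R] {W : ℤ → R}

lemma rel_swap (odd : W.Odd) (p q r : ℤ) : rel W q p r 0 = -rel W p q r 0 := by
  rw [rel, rel, ← neg_sub p q, odd, add_comm q p]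
  ring1

lemma rel_neg_right (odd : W.Odd) (p q r : ℤ) : rel W p (-q) r 0 = rel W p q r 0 := by
  simp only [rel, add_zero]
  rw [show -q + r = -(q - r) by ring, show -q - r = -(q + r) by ring, sub_neg_eq_add,
    ← sub_eq_add_neg, odd, odd, odd]
  ring1

lemma rel_neg_left (odd : W.Odd) (p q r : ℤ) : rel W (-p) q r 0 = rel W p q r 0 := by
  rw [← neg_neg (rel W (-p) q r 0), ← rel_swap odd, rel_neg_right odd, rel_swap odd, neg_neg]

lemma rel_odd_step (one : W 1 = 1) (odd_rel : ∀ m, rel W (m + 1) m 1 0 = 0)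
    {t f : ℤ} (hf : 1 ≤ f) (hft : f + 2 ≤ t)
    (ih : ∀ a b, 0 ≤ b → b ≤ a → a + b < 2 * t + 1 → rel W a b 1 0 = 0) :
    rel W (t + f + 1) (t - f) 1 0 = 0 := by
  have h1 := ih (t + 1) (f + 1) (by omega) (by omega) (by omega)
  have h2 := ih t f (by omega) (by omega) (by omega)
  have h3 := ih (t + 1) f (by omega) (by omega) (by omega)
  have h4 := ih t (f + 1) (by omega) (by omega) (by omega)
  -- `ring_nf` also normalises the arguments of `W`, which exposes the factors `W 1`.
  linear_combination (norm := (simp only [rel]; ring_nf; simp only [one]; ring1))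
    W (2 * f + 1) * odd_rel t + (W (t + 2) * W t ^ 3 - W (t - 1) * W (t + 1) ^ 3) * odd_rel f
      - W (t + f) * W (t - f) * h1
      - (W (t + 2) * W t * W (f + 1) ^ 2 - W (f + 2) * W f * W (t + 1) ^ 2) * h2
      + W (t + f + 1) * W (t - f - 1) * h3
      + (W (t + 2) * W t * W f ^ 2 - W (f + 1) * W (f - 1) * W (t + 1) ^ 2) * h4

lemma rel_even_step [IsDomain R] (one : W 1 = 1) (two : W 2 ≠ 0)
    (even_rel : ∀ m, rel W (m + 1) (m - 1) 1 0 = 0)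
    {t e : ℤ} (he : 2 ≤ e) (het : e + 3 ≤ t)
    (ih : ∀ a b, 0 ≤ b → b ≤ a → a + b < 2 * t → rel W a b 1 0 = 0) :
    rel W (t + e) (t - e) 1 0 = 0 := by
  have h1 := ih (t + 1) (e + 1) (by omega) (by omega) (by omega)
  have h2 := ih (t - 1) (e - 1) (by omega) (by omega) (by omega)
  have h3 := ih (t + 1) (e - 1) (by omega) (by omega) (by omega)
  have h4 := ih (t - 1) (e + 1) (by omega) (by omega) (by omega)
  have h5 := ih (t + e) 2 (by omega) (by omega) (by omega)
  have h6 := ih (t - e) 2 (by omega) (by omega) (by omega)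
  have key : W 2 ^ 2 * rel W (t + e) (t - e) 1 0 = 0 := by
    linear_combination (norm := (simp only [rel]; ring_nf; simp only [one]; ring1))
      W 2 * W (2 * e) * even_rel t
        + (W (t - 1) ^ 2 * W t * W (t + 2) - W (t - 2) * W t * W (t + 1) ^ 2) * even_rel e
        - W (t + e - 2) * W (t - e) * h1
        - (W (t + 2) * W t * W (e + 1) ^ 2 - W (e + 2) * W e * W (t + 1) ^ 2) * h2
        + W (t + e) * W (t - e - 2) * h3
        + (W (t + 2) * W t * W (e - 1) ^ 2 - W e * W (e - 2) * W (t + 1) ^ 2) * h4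
        + W (t - e) ^ 2 * h5 - W (t + e) ^ 2 * h6
  exact (mul_eq_zero.mp key).resolve_left (pow_ne_zero 2 two)

-- For `y = 2` the even step would use the relation at `(x, 2)` itself; the detour goes through
-- the relation `rel W 4 2 1 (2e - 2)` with `s ≠ 0`.
lemma rel_two_step [IsDomain R] (one : W 1 = 1) (ne_zero : ∀ n, n ≠ 0 → W n ≠ 0)
    (even_rel : ∀ m, rel W (m + 1) (m - 1) 1 0 = 0) (odd_rel : ∀ m, rel W (m + 1) m 1 0 = 0)
    {e : ℤ} (he : 2 ≤ e)
    (ih : ∀ a b, 0 ≤ b → b ≤ a → a + b < 2 * e + 4 → rel W a b 1 0 = 0) :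
    rel W (2 * e + 2) 2 1 0 = 0 := by
  have h1 := ih (e + 3) e (by omega) (by omega) (by omega)
  have h2 := ih (e + 3) (e - 1) (by omega) (by omega) (by omega)
  have h3 := ih (2 * e + 1) 2 (by omega) (by omega) (by omega)
  have h4 := ih (2 * e) 2 (by omega) (by omega) (by omega)
  have h5 := ih (2 * e) 3 (by omega) (by omega) (by omega)
  have h6 := ih (2 * e - 1) 2 (by omega) (by omega) (by omega)
  have rel_four_two : rel W 4 2 1 (2 * e - 2) = 0 := by
    linear_combination (norm := (simp only [rel]; ring_nf; simp only [one]; ring1))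
      W (2 * e - 1) * even_rel (e + 2)
        + (W (e + 1) ^ 2 * W (e + 2) * W (e + 4) - W e * W (e + 2) * W (e + 3) ^ 2) *
          odd_rel (e - 1)
        - W (2 * e) * W 2 * h1
        - (W (e + 4) * W (e + 2) * W e ^ 2 - W (e + 1) * W (e - 1) * W (e + 3) ^ 2) * even_rel e
        + W (2 * e + 1) * h2
        + (W (e + 4) * W (e + 2) * W (e - 1) ^ 2 - W e * W (e - 2) * W (e + 3) ^ 2) * odd_rel e
  have key : W 2 ^ 2 * W (2 * e - 1) * W (2 * e) * rel W (2 * e + 2) 2 1 0 = 0 := by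
    linear_combination (norm := (simp only [rel]; ring_nf; simp only [one]; ring1))
      W 2 * W (2 * e) ^ 2 * rel_four_two
        - W (2 * e + 2) * W (2 * e + 1) * h5
        + W (2 * e + 2) * W (2 * e + 3) * h6
        + W 2 ^ 2 * W (2 * e + 3) * W (2 * e) * h4
        - W 3 * W (2 * e - 1) * W (2 * e + 2) * h3
  refine (mul_eq_zero.mp key).resolve_left (mul_ne_zero (mul_ne_zero ?_ ?_) ?_)
  · exact pow_ne_zero 2 (ne_zero 2 two_ne_zero)
  · exact ne_zero _ (by omega)
  · exact ne_zero _ (by omega)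

theorem rel_one_eq_zero_of_le [IsDomain R] (odd : W.Odd) (zero : W 0 = 0) (one : W 1 = 1)
    (ne_zero : ∀ n, n ≠ 0 → W n ≠ 0)
    (even_rel : ∀ m, rel W (m + 1) (m - 1) 1 0 = 0) (odd_rel : ∀ m, rel W (m + 1) m 1 0 = 0)
    {x y : ℤ} (hy : 0 ≤ y) (hyx : y ≤ x) : rel W x y 1 0 = 0 := by
  have ih : ∀ a b, 0 ≤ b → b ≤ a → a + b < x + y → rel W a b 1 0 = 0 :=
    fun a b hb hba _ ↦ rel_one_eq_zero_of_le odd zero one ne_zero even_rel odd_rel hb hba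
  obtain rfl | rfl | hy2 : y = 0 ∨ y = 1 ∨ 2 ≤ y := by omega
  · simp only [rel, add_zero, sub_zero, zero_add, zero_sub, zero, odd 1, one]
    ring
  · simp only [rel, sub_self, zero]
    ring
  obtain rfl | rfl | rfl | hyx3 : x = y ∨ x = y + 1 ∨ x = y + 2 ∨ y + 3 ≤ x := by omega
  · simp only [rel, sub_self, zero]
    ring
  · exact odd_rel y
  · convert even_rel (y + 1) using 2 <;> ring
  obtain ⟨t, hxy | hxy⟩ := Int.even_or_odd' (x + y)
  · obtain rfl | hy3 := eq_or_lt_of_le hy2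
    · convert rel_two_step one ne_zero even_rel odd_rel (e := t - 2) (by omega)
        fun a b hb hba _ ↦ ih a b hb hba (by omega) using 2
      omega
    · convert rel_even_step one (ne_zero 2 two_ne_zero) even_rel (t := t) (e := t - y) (by omega)
        (by omega) fun a b hb hba _ ↦ ih a b hb hba (by omega) using 2 <;> omega
  · convert rel_odd_step one odd_rel (t := t) (f := t - y) (by omega) (by omega)
      fun a b hb hba _ ↦ ih a b hb hba (by omega) using 2 <;> omega
termination_by (x + y).toNat
decreasing_by omega

theorem rel_one_eq_zero [IsDomain R] (odd : W.Odd) (zero : W 0 = 0) (one : W 1 = 1)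
    (ne_zero : ∀ n, n ≠ 0 → W n ≠ 0)
    (even_rel : ∀ m, rel W (m + 1) (m - 1) 1 0 = 0) (odd_rel : ∀ m, rel W (m + 1) m 1 0 = 0)
    (x y : ℤ) : rel W x y 1 0 = 0 := by
  have habs : rel W x y 1 0 = rel W |x| |y| 1 0 := by
    rcases abs_choice x with hx | hx <;> rcases abs_choice y with hy | hy <;>
      simp only [hx, hy, rel_neg_left odd, rel_neg_right odd]
  rw [habs]
  rcases le_total |y| |x| with h | h
  · exact rel_one_eq_zero_of_le odd zero one ne_zero even_rel odd_rel (abs_nonneg y) h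
  · rw [← neg_eq_zero, ← rel_swap odd]
    exact rel_one_eq_zero_of_le odd zero one ne_zero even_rel odd_rel (abs_nonneg x) h

end IsEllipticNet

namespace WeierstrassCurve

open Affine.CoordinateRing

variable {R : Type*} [CommRing R] (W : WeierstrassCurve R)

lemma ΨSq_abs (n : ℤ) : W.ΨSq |n| = W.ΨSq n := by
  rcases abs_choice n with h | h <;> simp only [h, ΨSq_neg]

variable [IsDomain R]

lemma ψ_ne_zero {n : ℤ} (hn : (n : R) ≠ 0) : W.ψ n ≠ 0 := by
  intro h
  apply W.ΨSq_ne_zero hn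
  apply FaithfulSMul.algebraMap_injective R[X] W.toAffine.CoordinateRing
  change Affine.CoordinateRing.mk W (C _) = Affine.CoordinateRing.mk W (C 0)
  rw [← mk_Ψ_sq, ← mk_ψ, h, C_0, map_zero, zero_pow two_ne_zero]

lemma rel_ψ_eq_zero [CharZero R] (p q : ℤ) : IsEllipticNet.rel W.ψ p q 1 0 = 0 := by
  refine IsEllipticNet.rel_one_eq_zero W.ψ_neg W.ψ_zero W.ψ_one
    (fun n hn ↦ W.ψ_ne_zero (Int.cast_ne_zero.mpr hn)) (fun m ↦ ?_) (fun m ↦ ?_) p q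
  · rw [IsEllipticNet.rel_even, ψ_two, ψ_one, ψ_even]
    ring
  · rw [IsEllipticNet.rel_odd, ψ_one, ψ_odd]
    ring

lemma φ_mul_ψ_sq_sub_φ_mul_ψ_sq [CharZero R] (n m : ℤ) :
    W.φ m * W.ψ n ^ 2 - W.φ n * W.ψ m ^ 2 = W.ψ (n + m) * W.ψ (n - m) := by
  linear_combination
    (norm := (simp only [WeierstrassCurve.φ, IsEllipticNet.rel, add_zero, ψ_one]; ring_nf))
    -W.rel_ψ_eq_zero n m

lemma Φ_mul_ΨSq_sub_Φ_mul_ΨSq_sq [CharZero R] (n m : ℤ) :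
    (W.Φ m * W.ΨSq n - W.Φ n * W.ΨSq m) ^ 2 = W.ΨSq (n + m) * W.ΨSq (n - m) := by
  apply FaithfulSMul.algebraMap_injective R[X] W.toAffine.CoordinateRing
  have h := congrArg (Affine.CoordinateRing.mk W) (W.φ_mul_ψ_sq_sub_φ_mul_ψ_sq n m)
  simp only [map_sub, map_mul, map_pow, mk_φ, mk_ψ] at h
  change Affine.CoordinateRing.mk W (C _) = Affine.CoordinateRing.mk W (C _)
  simp only [map_sub, map_mul, map_pow, ← mk_Ψ_sq]
  rw [h, mul_pow]

end WeierstrassCurve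

theorem statement4_general (K : Type*) [Field K] [NumberField K]
    (W : WeierstrassCurve K) (n m : ℤ) :
    (W.Φ m * W.ΨSq n - W.Φ n * W.ΨSq m) ^ 2 = W.ΨSq (n + m) * W.ΨSq |n - m| := by
  rw [W.ΨSq_abs]
  exact W.Φ_mul_ΨSq_sub_Φ_mul_ΨSq_sq n m

/-- Let `E` be an elliptic curve over a number field `K` given by a Weierstrass
equation, with division polynomials `ψ_n` and `φ_n = xψ_n² − ψ_{n+1}ψ_{n−1}`, regarded (via the
on-curve substitution) as polynomials in `x` alone (these are `W.ΨSq n` and `W.Φ n` in Mathlib).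
Then for all positive integers `n`, `m` one has the polynomial identity
`(φ_m(x)·ψ_n²(x) − φ_n(x)·ψ_m²(x))² = ψ_{n+m}²(x)·ψ_{|n−m|}²(x)`. -/
theorem statement4 (K : Type*) [Field K] [NumberField K]
    (W : WeierstrassCurve K) (hΔ : W.Δ ≠ 0) (n m : ℤ) (hn : 0 < n) (hm : 0 < m) :
    (W.Φ m * W.ΨSq n - W.Φ n * W.ΨSq m) ^ 2 = W.ΨSq (n + m) * W.ΨSq |n - m| :=
  statement4_general K W n m
end

section
/- Let E be an elliptic curve over ℚ given by a Weierstrass equation with integer coefficients and let P ∈ E(ℚ). Then B_1(E,P) divides B_n(E,P) for every n ∈ ℕ; in particular the sequence β_n(E,P) = ±B_n(E,P)/B_1(E,P) is a sequence of integers. -/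
/-!
Fix a prime `p` and `m ≥ 1`. The points of `E(ℚ)` with `v_p(x) ≤ -2m`, together with `O`, are
closed under addition (Silverman's `E_m`). In the coordinates `z = -x/y`, `w = -1/y` these points
have `v(z) ≥ m` and `v(w) ≥ 3m`; the secant or tangent line through two of them then has slope of
valuation `≥ 2m` and intercept of valuation `≥ 3m`, and the cubic in `z` that cuts out the third
intersection point forces `v(z) ≥ m` for that point too.

On the curve `v_p(x) = -2k` and `v_p(y) = -3k` as soon as one of them is negative, so the
denominator of `x(nP)` is the square `B_n ^ 2`, and `p^k ∥ B_1` means `P ∈ E_k`. Then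
`nP ∈ E_k`, i.e. `p^k ∣ B_n`.
-/

open WeierstrassCurve Polynomial

noncomputable section

attribute [local instance] Classical.propDecidable

namespace EDS

variable (W : WeierstrassCurve ℤ)

/-- The curve `E` over `ℚ`, given by a Weierstrass equation with integer coefficients. -/
abbrev WQ : WeierstrassCurve ℚ := W.baseChange ℚ

/-- The `x`-coordinate of a rational point (junk value `0` at the point at infinity). -/
def ptX : (WQ W).toAffine.Point → ℚ
  | .zero => 0
  | @WeierstrassCurve.Affine.Point.some _ _ _ x _ _ => x

/-- The `y`-coordinate of a rational point (junk value `0` at the point at infinity). -/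
def ptY : (WQ W).toAffine.Point → ℚ
  | .zero => 0
  | @WeierstrassCurve.Affine.Point.some _ _ _ _ y _ => y

/-- `B n` is the nonnegative square root of the denominator of `x(nP)`, with `B n = 0` when
`nP = O`. -/
def B (P : (WQ W).toAffine.Point) (n : ℕ) : ℕ :=
  if n • P = 0 then 0 else Nat.sqrt (ptX W (n • P)).den

/-- `ψ n (x(P), y(P))`, the `n`-th division polynomial evaluated at `P`. -/
def ψval (P : (WQ W).toAffine.Point) (n : ℕ) : ℚ :=
  ((WQ W).Ψ n).evalEval (ptX W P) (ptY W P)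

/-- `β n = sign(ψ_n(x(P),y(P))) * B n / B 1`. -/
def β (P : (WQ W).toAffine.Point) (n : ℕ) : ℚ :=
  (SignType.sign (ψval W P n) : ℚ) * (B W P n : ℚ) / (B W P 1 : ℚ)

/-- Reduction modulo `p` of a `p`-integral rational number. -/
def redQ (p : ℕ) (x : ℚ) : ZMod p := (x.num : ZMod p) * (x.den : ZMod p)⁻¹

/-- The reduced curve over `𝔽_p`. -/
abbrev Wred (p : ℕ) : WeierstrassCurve (ZMod p) := W.map (Int.castRingHom (ZMod p))

/-- The point `Q` reduces modulo `p` to a nonsingular point of the reduced curve (the point at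
infinity, to which `Q` reduces when `p` divides the denominator of `x(Q)`, is nonsingular). -/
def redNonsingular (p : ℕ) : (WQ W).toAffine.Point → Prop
  | .zero => True
  | @WeierstrassCurve.Affine.Point.some _ _ _ x y _ =>
      (p ∣ x.den) ∨
        (¬ p ∣ x.den ∧ ¬ p ∣ y.den ∧
          (Wred W p).toAffine.Nonsingular (redQ p x) (redQ p y))

/-- `r(p, P)`: the least positive integer `r` such that `rP` reduces modulo `p` to a
nonsingular point, i.e. the order of `P` in `E(ℚ_p)/E₀(ℚ_p)`. -/
def rOrd (p : ℕ) (P : (WQ W).toAffine.Point) : ℕ :=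
  sInf {r : ℕ | 0 < r ∧ redNonsingular W p (r • P)}

/-- `M(P)`: the least common multiple of `r(p,P)` over all primes `p`, i.e. the least positive
integer divisible by `r(p,P)` for every prime `p`. -/
def MP (P : (WQ W).toAffine.Point) : ℕ :=
  sInf {M : ℕ | 0 < M ∧ ∀ p : ℕ, p.Prime → rOrd W p P ∣ M}

end EDS

/-- `ValGE p k q` says `k ≤ v_p(q)`, with `q = 0` counting as having every valuation
(`padicValRat p 0 = 0` is a junk value). -/
def ValGE (p : ℕ) (k : ℤ) (q : ℚ) : Prop :=
  q = 0 ∨ k ≤ padicValRat p q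

namespace ValGE

variable {p : ℕ} {k l : ℤ} {a b : ℚ}

lemma zero : ValGE p k 0 := Or.inl rfl

lemma of_le (h : k ≤ padicValRat p a) : ValGE p k a := Or.inr h

lemma self (a : ℚ) : ValGE p (padicValRat p a) a := of_le le_rfl

lemma le (h : ValGE p k a) (ha : a ≠ 0) : k ≤ padicValRat p a := h.resolve_left ha

lemma mono (h : ValGE p k a) (hlk : l ≤ k) : ValGE p l a :=
  h.imp id hlk.trans

lemma neg (h : ValGE p k a) : ValGE p k (-a) := by
  rcases h with rfl | h
  · simpa using zero
  · exact of_le (by rwa [padicValRat.neg])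

lemma intCast (z : ℤ) : ValGE p 0 (z : ℚ) :=
  of_le (by rw [padicValRat.of_int]; positivity)

lemma natCast (n : ℕ) : ValGE p 0 (n : ℚ) := by
  simpa using intCast (p := p) n

lemma ofNat (n : ℕ) [n.AtLeastTwo] : ValGE p 0 (OfNat.ofNat n : ℚ) :=
  natCast n

lemma one : ValGE p 0 (1 : ℚ) :=
  of_le (by simp)

variable [Fact p.Prime]

lemma add (ha : ValGE p k a) (hb : ValGE p k b) : ValGE p k (a + b) := by
  rcases ha with rfl | ha
  · simpa using hb
  rcases hb with rfl | hb
  · simpa using of_le ha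
  by_cases hab : a + b = 0
  · exact Or.inl hab
  · exact of_le ((le_min ha hb).trans (padicValRat.min_le_padicValRat_add hab))

lemma sub (ha : ValGE p k a) (hb : ValGE p k b) : ValGE p k (a - b) := by
  simpa [sub_eq_add_neg] using ha.add hb.neg

lemma mul (ha : ValGE p k a) (hb : ValGE p l b) : ValGE p (k + l) (a * b) := by
  rcases ha with rfl | ha
  · simpa using zero
  rcases hb with rfl | hb
  · simpa using zero
  by_cases ha0 : a = 0
  · simp [ha0, zero]
  by_cases hb0 : b = 0
  · simp [hb0, zero]
  exact of_le (by rw [padicValRat.mul ha0 hb0]; omega)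

lemma pow (h : ValGE p k a) (n : ℕ) : ValGE p (n * k) (a ^ n) := by
  induction n with
  | zero => exact of_le (by simp)
  | succ n ih => simpa [pow_succ, add_mul] using ih.mul h

lemma unit (h : ValGE p 1 (1 - a)) : a ≠ 0 ∧ padicValRat p a = 0 := by
  have ha : ValGE p 0 a := by simpa using one.sub (h.mono zero_le_one)
  have h1 : ¬ ValGE p 1 1 := fun h1 => by simpa using h1.le one_ne_zero
  have ha0 : a ≠ 0 := by rintro rfl; exact h1 (by simpa using h)
  refine ⟨ha0, le_antisymm ?_ (ha.le ha0)⟩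
  by_contra! hpos
  exact h1 (by simpa using (of_le hpos).add h)

lemma div_unit {d : ℚ} (ha : ValGE p k a) (hd : ValGE p 1 (1 - d)) : ValGE p k (a / d) := by
  obtain ⟨hd0, hvd⟩ := unit hd
  by_cases ha0 : a = 0
  · simp [ha0, zero]
  · exact of_le (by rw [padicValRat.div ha0 hd0, hvd, sub_zero]; exact ha.le ha0)

end ValGE

lemma padicValNat_den (p : ℕ) [Fact p.Prime] (q : ℚ) :
    padicValNat p q.den = (-padicValRat p q).toNat := by
  rw [padicValRat_def, padicValInt]
  by_cases hd : p ∣ q.den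
  · have hn : ¬ p ∣ q.num.natAbs := fun hn =>
      (Fact.out : p.Prime).one_lt.ne' (Nat.eq_one_of_dvd_coprimes q.reduced hn hd)
    rw [padicValNat.eq_zero_of_not_dvd hn]
    omega
  · rw [padicValNat.eq_zero_of_not_dvd hd]
    omega

lemma Nat.exists_eq_sq_of_pow_three_eq_sq {a b : ℕ} (h : a ^ 3 = b ^ 2) : ∃ c, a = c ^ 2 := by
  rcases eq_or_ne a 0 with rfl | ha
  · exact ⟨0, rfl⟩
  obtain ⟨c, rfl⟩ : a ∣ b := (Nat.pow_dvd_pow_iff two_ne_zero).mp (h ▸ pow_dvd_pow a (by norm_num))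
  refine ⟨c, Nat.eq_of_mul_eq_mul_left (pow_pos (Nat.pos_of_ne_zero ha) 2) ?_⟩
  rw [← pow_succ, h, mul_pow]

lemma exists_int_eq_sign_mul_div {a b : ℕ} (h : a ∣ b) (σ : SignType) :
    ∃ z : ℤ, (σ : ℚ) * b / a = z := by
  obtain ⟨c, rfl⟩ := h
  rcases eq_or_ne a 0 with rfl | ha
  · exact ⟨0, by simp⟩
  · exact ⟨σ * c, by push_cast; field_simp⟩

namespace WeierstrassCurve.Affine

variable {F : Type*} [Field F] [DecidableEq F] {W : Affine F} {x₁ x₂ y₁ y₂ : F}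

lemma Y_eq_slope_mul_add (h₁ : W.Equation x₁ y₁) (h₂ : W.Equation x₂ y₂)
    (hxy : ¬(x₁ = x₂ ∧ y₁ = W.negY x₂ y₂)) :
    y₂ = W.slope x₁ x₂ y₁ y₂ * x₂ + (y₁ - W.slope x₁ x₂ y₁ y₂ * x₁) := by
  by_cases hx : x₁ = x₂
  · obtain rfl := Y_eq_of_Y_ne h₁ h₂ hx fun hy => hxy ⟨hx, hy⟩
    rw [hx]
    ring
  · rw [slope_of_X_ne hx]
    field_simp [sub_ne_zero.mpr hx]
    ring

lemma slope_mul_of_X_eq (h₁ : W.Equation x₁ y₁) (h₂ : W.Equation x₂ y₂) (hx : x₁ = x₂)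
    (hy : y₁ ≠ W.negY x₂ y₂) :
    W.slope x₁ x₂ y₁ y₂ * (2 * y₁ + W.a₁ * x₁ + W.a₃) =
      3 * x₁ ^ 2 + 2 * W.a₂ * x₁ + W.a₄ - W.a₁ * y₁ := by
  obtain rfl := Y_eq_of_Y_ne h₁ h₂ hx hy
  subst hx
  have hden : y₁ - W.negY x₁ y₁ = 2 * y₁ + W.a₁ * x₁ + W.a₃ := by rw [negY]; ring
  rw [slope_of_Y_ne rfl hy, ← hden, div_mul_cancel₀ _ (sub_ne_zero.mpr hy)]

end WeierstrassCurve.Affine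

structure IsPIntegral (p : ℕ) (W : WeierstrassCurve ℚ) : Prop where
  a₁ : ValGE p 0 W.a₁
  a₂ : ValGE p 0 W.a₂
  a₃ : ValGE p 0 W.a₃
  a₄ : ValGE p 0 W.a₄
  a₆ : ValGE p 0 W.a₆

lemma isPIntegral_baseChange (W : WeierstrassCurve ℤ) (p : ℕ) : IsPIntegral p (W.baseChange ℚ) :=
  ⟨.intCast _, .intCast _, .intCast _, .intCast _, .intCast _⟩

namespace WeierstrassCurve

variable (W : WeierstrassCurve ℚ)

/-- Silverman's `f(z, w)`: in the coordinates `z = -x/y`, `w = -1/y` the curve reads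
`w = f(z, w)`. -/
def formalF (z w : ℚ) : ℚ :=
  z ^ 3 + W.a₁ * z * w + W.a₂ * z ^ 2 * w + W.a₃ * w ^ 2 + W.a₄ * z * w ^ 2 + W.a₆ * w ^ 3

def secantNum (z₁ z₂ w₁ : ℚ) : ℚ :=
  z₁ ^ 2 + z₁ * z₂ + z₂ ^ 2 + W.a₁ * w₁ + W.a₂ * (z₁ + z₂) * w₁ + W.a₄ * w₁ ^ 2

def secantDen (z₂ w₁ w₂ : ℚ) : ℚ :=
  1 - (W.a₁ * z₂ + W.a₂ * z₂ ^ 2 + W.a₃ * (w₁ + w₂) + W.a₄ * z₂ * (w₁ + w₂)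
    + W.a₆ * (w₁ ^ 2 + w₁ * w₂ + w₂ ^ 2))

lemma formalF_sub_formalF (z₁ z₂ w₁ w₂ : ℚ) :
    W.formalF z₁ w₁ - W.formalF z₂ w₂ =
      (z₁ - z₂) * W.secantNum z₁ z₂ w₁ + (w₁ - w₂) * (1 - W.secantDen z₂ w₁ w₂) := by
  simp only [formalF, secantNum, secantDen]
  ring

lemma sub_mul_secantDen {z₁ z₂ w₁ w₂ : ℚ} (h₁ : w₁ = W.formalF z₁ w₁)
    (h₂ : w₂ = W.formalF z₂ w₂) :
    (w₁ - w₂) * W.secantDen z₂ w₁ w₂ = (z₁ - z₂) * W.secantNum z₁ z₂ w₁ := by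
  linear_combination h₁ - h₂ + W.formalF_sub_formalF z₁ z₂ w₁ w₂

lemma neg_inv_eq_formalF {x y : ℚ} (h : W.toAffine.Equation x y) (hy : y ≠ 0) :
    -y⁻¹ = W.formalF (-x / y) (-y⁻¹) := by
  rw [Affine.equation_iff] at h
  simp only [formalF]
  field_simp
  linear_combination -h

lemma secant_relation_of_tangent {x y L : ℚ} (h : W.toAffine.Equation x y) (hy : y ≠ 0)
    (hL : L * (2 * y + W.a₁ * x + W.a₃) = 3 * x ^ 2 + 2 * W.a₂ * x + W.a₄ - W.a₁ * y) :
    L * W.secantDen (-x / y) (-y⁻¹) (-y⁻¹) + (y - L * x) * W.secantNum (-x / y) (-x / y) (-y⁻¹)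
      = 0 := by
  rw [Affine.equation_iff] at h
  simp only [secantDen, secantNum]
  field_simp
  linear_combination (3 * L) * h - y * hL

end WeierstrassCurve

lemma line_formal_coords {L ν x y : ℚ} (hy : y ≠ 0) (h : y = L * x + ν) :
    L * (-x / y) + ν * (-y⁻¹) = -1 := by
  rw [show L * (-x / y) + ν * (-y⁻¹) = -((L * x + ν) / y) by ring, ← h, div_self hy]

/-- In the coordinates `(z, w)` the line `L z + ν w = -1` has slope `-L/ν`. -/
lemma valGE_slope {p : ℕ} [Fact p.Prime] {k : ℤ} {L ν z w D N : ℚ} (hline : L * z + ν * w = -1)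
    (h : L * D + ν * N = 0) (hD : ValGE p 1 (1 - D)) (hN : ValGE p k N) :
    ν ≠ 0 ∧ ValGE p k (L / ν) := by
  obtain ⟨hD0, -⟩ := ValGE.unit hD
  have hν : ν ≠ 0 := by
    rintro rfl
    obtain rfl : L = 0 := by simpa [hD0] using h
    simp at hline
  refine ⟨hν, ?_⟩
  rw [show L / ν = -(N / D) by field_simp; linear_combination h]
  exact (hN.div_unit hD).neg

namespace IsPIntegral

variable {p : ℕ} [Fact p.Prime] {W : WeierstrassCurve ℚ} (hW : IsPIntegral p W) {m : ℤ}
include hW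

theorem exists_padicValRat_eq {x y : ℚ} (h : W.toAffine.Equation x y)
    (hneg : padicValRat p x < 0 ∨ padicValRat p y < 0) :
    ∃ k : ℤ, 0 < k ∧ padicValRat p x = -(2 * k) ∧ padicValRat p y = -(3 * k) := by
  rw [Affine.equation_iff] at h
  set u := padicValRat p x
  set w := padicValRat p y
  have hx := ValGE.self (p := p) x
  have hy := ValGE.self (p := p) y
  -- the other terms of the equation have valuation above `min (v (y ^ 2)) (v (x ^ 3))`
  have hrest : ValGE p (min (2 * w) (3 * u) + 1) (y ^ 2 - x ^ 3) := by
    rw [show y ^ 2 - x ^ 3 = W.a₂ * x ^ 2 + W.a₄ * x + W.a₆ - W.a₁ * x * y - W.a₃ * y by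
      linear_combination h]
    refine ((((hW.a₂.mul (hx.pow 2)).mono ?_).add ((hW.a₄.mul hx).mono ?_) |>.add
      (hW.a₆.mono ?_)).sub (((hW.a₁.mul hx).mul hy).mono ?_)).sub ((hW.a₃.mul hy).mono ?_) <;>
      push_cast <;> omega
  rcases lt_trichotomy (2 * w) (3 * u) with hlt | heq | hgt
  · have hy0 : y ≠ 0 := by
      rintro rfl
      have : w = 0 := padicValRat.zero
      omega
    have hy2 : ValGE p (2 * w + 1) (y ^ 2) := by
      simpa using (hrest.add ((hx.pow 3).mono (by push_cast; omega))).mono (by omega)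
    have := hy2.le (pow_ne_zero 2 hy0)
    rw [padicValRat.pow] at this
    push_cast at this
    omega
  · exact ⟨u - w, by omega, by omega, by omega⟩
  · have hx0 : x ≠ 0 := by
      rintro rfl
      have : u = 0 := padicValRat.zero
      omega
    have hx3 : ValGE p (3 * u + 1) (x ^ 3) := by
      simpa using (((hy.pow 2).mono (by push_cast; omega)).sub hrest).mono (by omega)
    have := hx3.le (pow_ne_zero 3 hx0)
    rw [padicValRat.pow] at this
    push_cast at this
    omega

lemma valGE_secantNum (hm : 0 ≤ m) {z₁ z₂ w₁ : ℚ} (hz₁ : ValGE p m z₁) (hz₂ : ValGE p m z₂)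
    (hw₁ : ValGE p (3 * m) w₁) : ValGE p (2 * m) (W.secantNum z₁ z₂ w₁) := by
  refine (((((hz₁.pow 2).mono ?_).add ((hz₁.mul hz₂).mono ?_)).add ((hz₂.pow 2).mono ?_)).add
    ((hW.a₁.mul hw₁).mono ?_) |>.add (((hW.a₂.mul (hz₁.add hz₂)).mul hw₁).mono ?_)).add
    ((hW.a₄.mul (hw₁.pow 2)).mono ?_) <;> push_cast <;> omega

lemma valGE_one_sub_secantDen (hm : 0 < m) {z₂ w₁ w₂ : ℚ} (hz₂ : ValGE p m z₂)
    (hw₁ : ValGE p (3 * m) w₁) (hw₂ : ValGE p (3 * m) w₂) :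
    ValGE p 1 (1 - W.secantDen z₂ w₁ w₂) := by
  rw [secantDen, sub_sub_cancel]
  refine ((((hW.a₁.mul hz₂).mono ?_).add ((hW.a₂.mul (hz₂.pow 2)).mono ?_)).add
    ((hW.a₃.mul (hw₁.add hw₂)).mono ?_) |>.add ((hW.a₄.mul hz₂).mul (hw₁.add hw₂) |>.mono ?_)).add
    ((hW.a₆.mul ((((hw₁.pow 2).add ((hw₁.mul hw₂).mono ?_)).add ((hw₂.pow 2).mono ?_)))).mono ?_)
    <;> push_cast <;> omega

theorem valGE_of_line (hm : 0 < m) {z w l c : ℚ} (hE : w = W.formalF z w) (hline : w = l * z + c)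
    (hl : ValGE p (2 * m) l) (hc : ValGE p (3 * m) c) : ValGE p m z := by
  set A := 1 + (W.a₂ * l + W.a₄ * l ^ 2 + W.a₆ * l ^ 3)
  set B := W.a₁ * l + W.a₂ * c + W.a₃ * l ^ 2 + 2 * W.a₄ * l * c + 3 * W.a₆ * l ^ 2 * c
  set C := W.a₁ * c + 2 * W.a₃ * l * c + W.a₄ * c ^ 2 + 3 * W.a₆ * l * c ^ 2 - l
  set E := W.a₃ * c ^ 2 + W.a₆ * c ^ 3 - c
  have hcubic : A * z ^ 3 = -(B * z ^ 2 + C * z + E) := by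
    rw [hline, formalF] at hE
    linear_combination -hE
  have hA : ValGE p 1 (1 - A) := by
    rw [sub_add_cancel_left]
    refine (((hW.a₂.mul hl).mono ?_).add ((hW.a₄.mul (hl.pow 2)).mono ?_)).add
      ((hW.a₆.mul (hl.pow 3)).mono ?_) |>.neg <;> push_cast <;> omega
  have hB : ValGE p (2 * m) B := by
    refine ((((hW.a₁.mul hl).mono ?_).add ((hW.a₂.mul hc).mono ?_)).add
      ((hW.a₃.mul (hl.pow 2)).mono ?_) |>.add ((((ValGE.ofNat 2).mul hW.a₄).mul hl).mul hc
      |>.mono ?_)).add ((((ValGE.ofNat 3).mul hW.a₆).mul (hl.pow 2)).mul hc |>.mono ?_) <;>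
      push_cast <;> omega
  have hC : ValGE p (2 * m) C := by
    refine ((((hW.a₁.mul hc).mono ?_).add ((((ValGE.ofNat 2).mul hW.a₃).mul hl).mul hc
      |>.mono ?_)).add ((hW.a₄.mul (hc.pow 2)).mono ?_) |>.add ((((ValGE.ofNat 3).mul hW.a₆).mul
      hl).mul (hc.pow 2) |>.mono ?_)).sub (hl.mono ?_) <;> push_cast <;> omega
  have hE' : ValGE p (3 * m) E := by
    refine (((hW.a₃.mul (hc.pow 2)).mono ?_).add ((hW.a₆.mul (hc.pow 3)).mono ?_)).sub hc <;>
      push_cast <;> omega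
  -- otherwise the leading term `A z ^ 3` of the cubic in `z` would dominate
  by_contra hz
  obtain ⟨hz0, hvz⟩ : z ≠ 0 ∧ padicValRat p z < m := by
    simpa [ValGE, not_or] using hz
  set v := padicValRat p z
  have hz := ValGE.self (p := p) z
  have hrest : ValGE p (3 * v + 1) (A * z ^ 3) := by
    rw [hcubic]
    refine ((((hB.mul (hz.pow 2)).mono ?_).add ((hC.mul hz).mono ?_)).add (hE'.mono ?_)).neg <;>
      push_cast <;> omega
  obtain ⟨hA0, hvA⟩ := ValGE.unit hA
  have := hrest.le (mul_ne_zero hA0 (pow_ne_zero 3 hz0))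
  rw [padicValRat.mul hA0 (pow_ne_zero 3 hz0), hvA, padicValRat.pow] at this
  push_cast at this
  omega

lemma valGE_formal_coords (hm : 0 < m) {x y : ℚ} (h : W.toAffine.Equation x y)
    (hv : padicValRat p x ≤ -(2 * m)) :
    y ≠ 0 ∧ ValGE p m (-x / y) ∧ ValGE p (3 * m) (-y⁻¹) := by
  obtain ⟨k, hk, hx, hy⟩ := hW.exists_padicValRat_eq h (.inl (by omega))
  have hx0 : x ≠ 0 := by rintro rfl; simp at hx; omega
  have hy0 : y ≠ 0 := by rintro rfl; simp at hy; omega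
  refine ⟨hy0, .of_le ?_, .of_le ?_⟩
  · rw [neg_div, padicValRat.neg, padicValRat.div hx0 hy0]
    omega
  · rw [padicValRat.neg, padicValRat.inv]
    omega

theorem valGE_slope_of_collinear (hm : 0 < m) {x₁ y₁ x₂ y₂ L ν : ℚ}
    (h₁ : W.toAffine.Equation x₁ y₁) (h₂ : W.toAffine.Equation x₂ y₂)
    (hv₁ : padicValRat p x₁ ≤ -(2 * m)) (hv₂ : padicValRat p x₂ ≤ -(2 * m))
    (hl₁ : y₁ = L * x₁ + ν) (hl₂ : y₂ = L * x₂ + ν)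
    (htangent : x₁ = x₂ →
      y₁ = y₂ ∧ L * (2 * y₁ + W.a₁ * x₁ + W.a₃) = 3 * x₁ ^ 2 + 2 * W.a₂ * x₁ + W.a₄ - W.a₁ * y₁) :
    ν ≠ 0 ∧ ValGE p (2 * m) (L / ν) ∧ ValGE p (3 * m) ν⁻¹ := by
  obtain ⟨hy₁, hz₁, hw₁⟩ := hW.valGE_formal_coords hm h₁ hv₁
  obtain ⟨hy₂, hz₂, hw₂⟩ := hW.valGE_formal_coords hm h₂ hv₂
  have hD := hW.valGE_one_sub_secantDen hm hz₂ hw₁ hw₂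
  obtain ⟨hν, hslope⟩ : ν ≠ 0 ∧ ValGE p (2 * m) (L / ν) := by
    refine valGE_slope (line_formal_coords hy₁ hl₁) ?_ hD (hW.valGE_secantNum hm.le hz₁ hz₂ hw₁)
    by_cases hx : x₁ = x₂
    · obtain ⟨rfl, hT⟩ := htangent hx
      subst hx
      rw [show ν = y₁ - L * x₁ by linear_combination -hl₁]
      exact W.secant_relation_of_tangent h₁ hy₁ hT
    · have hsec := W.sub_mul_secantDen (W.neg_inv_eq_formalF h₁ hy₁) (W.neg_inv_eq_formalF h₂ hy₂)
      have hz : -x₁ / y₁ - -x₂ / y₂ ≠ 0 := by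
        intro hz
        have hw : -y₁⁻¹ - -y₂⁻¹ = 0 :=
          (mul_eq_zero.mp (by rw [hsec, hz, zero_mul])).resolve_right (ValGE.unit hD).1
        rw [sub_eq_zero, neg_inj, inv_inj] at hw
        subst hw
        rw [sub_eq_zero, neg_div, neg_div, neg_inj, div_left_inj' hy₁] at hz
        exact hx hz
      apply mul_left_cancel₀ hz
      linear_combination W.secantDen (-x₂ / y₂) (-y₁⁻¹) (-y₂⁻¹) *
        (line_formal_coords hy₁ hl₁ - line_formal_coords hy₂ hl₂) - ν * hsec
  refine ⟨hν, hslope, ?_⟩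
  have h := line_formal_coords hy₁ hl₁
  generalize -x₁ / y₁ = z₁ at hz₁ h
  generalize -y₁⁻¹ = w₁ at hw₁ h
  rw [show ν⁻¹ = -(L / ν * z₁ + w₁) by field_simp; linear_combination h]
  exact (((hslope.mul hz₁).mono (by omega)).add hw₁).neg

theorem padicValRat_le_of_line (hm : 0 < m) {x y L ν : ℚ} (h : W.toAffine.Equation x y)
    (hl : y = L * x + ν) (hν : ν ≠ 0) (hslope : ValGE p (2 * m) (L / ν))
    (hc : ValGE p (3 * m) ν⁻¹) : padicValRat p x ≤ -(2 * m) := by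
  by_cases hy : y = 0
  · have hL : L ≠ 0 := by
      rintro rfl
      exact hν (by simpa [hy] using hl.symm)
    rw [show x = (-(L / ν))⁻¹ by field_simp; linear_combination hy - hl, padicValRat.inv,
      padicValRat.neg]
    linarith [hslope.le (div_ne_zero hL hν)]
  have hz := hW.valGE_of_line hm (W.neg_inv_eq_formalF h hy) (l := -(L / ν)) (c := -ν⁻¹)
    (by field_simp; linear_combination hl) hslope.neg hc.neg
  have hw : ValGE p (3 * m) (-y⁻¹) := by
    rw [show -y⁻¹ = -(L / ν) * (-x / y) + -ν⁻¹ by field_simp; linear_combination hl]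
    exact ((hslope.neg.mul hz).mono (by omega)).add hc.neg
  have := hw.le (by simpa using hy)
  rw [padicValRat.neg, padicValRat.inv] at this
  obtain ⟨k, hk, hx, hy⟩ := hW.exists_padicValRat_eq h (.inr (by omega))
  omega

end IsPIntegral

section Filtration

variable {p : ℕ} [Fact p.Prime] {W : WeierstrassCurve ℚ} {m : ℤ}

/-- Silverman's `E_m`. -/
def InFiltration (p : ℕ) (m : ℤ) : W.toAffine.Point → Prop
  | .zero => True
  | .some x _ _ => padicValRat p x ≤ -(2 * m)

theorem InFiltration.add (hW : IsPIntegral p W) (hm : 0 < m) {P Q : W.toAffine.Point}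
    (hP : InFiltration p m P) (hQ : InFiltration p m Q) : InFiltration p m (P + Q) := by
  rcases P with _ | ⟨x₁, y₁, h₁⟩
  · exact hQ
  rcases Q with _ | ⟨x₂, y₂, h₂⟩
  · exact hP
  by_cases hxy : x₁ = x₂ ∧ y₁ = W.toAffine.negY x₂ y₂
  · rw [Affine.Point.add_of_Y_eq hxy.1 hxy.2]
    trivial
  rw [Affine.Point.add_some hxy]
  obtain ⟨hν, hslope, hc⟩ := hW.valGE_slope_of_collinear hm h₁.1 h₂.1 hP hQ (by ring)
    (Affine.Y_eq_slope_mul_add h₁.1 h₂.1 hxy)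
    fun hx => ⟨Affine.Y_eq_of_Y_ne h₁.1 h₂.1 hx fun hy => hxy ⟨hx, hy⟩,
      Affine.slope_mul_of_X_eq h₁.1 h₂.1 hx fun hy => hxy ⟨hx, hy⟩⟩
  exact hW.padicValRat_le_of_line hm (Affine.equation_negAdd h₁.1 h₂.1 hxy)
    (by rw [Affine.negAddY]; ring) hν hslope hc

theorem InFiltration.nsmul (hW : IsPIntegral p W) (hm : 0 < m) {P : W.toAffine.Point}
    (hP : InFiltration p m P) (n : ℕ) : InFiltration p m (n • P) := by
  induction n with
  | zero => rw [zero_nsmul]; trivial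
  | succ n ih => rw [succ_nsmul]; exact ih.add hW hm hP

end Filtration

section Denominators

variable {W : WeierstrassCurve ℚ} (hW : ∀ p, p.Prime → IsPIntegral p W)
include hW

theorem den_pow_three_eq_den_sq {x y : ℚ} (h : W.toAffine.Equation x y) :
    x.den ^ 3 = y.den ^ 2 := by
  refine Nat.eq_of_factorization_eq (pow_ne_zero _ x.den_nz) (pow_ne_zero _ y.den_nz) fun q => ?_
  by_cases hq : q.Prime
  · have := Fact.mk hq
    simp only [Nat.factorization_pow, Finsupp.smul_apply, smul_eq_mul, Nat.factorization_def _ hq,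
      padicValNat_den]
    by_cases hneg : padicValRat q x < 0 ∨ padicValRat q y < 0
    · obtain ⟨k, hk, hx, hy⟩ := (hW q hq).exists_padicValRat_eq h hneg
      rw [hx, hy]
      omega
    · omega
  · simp [Nat.factorization_eq_zero_of_not_prime _ hq]

theorem sqrt_den_sq {x y : ℚ} (h : W.toAffine.Equation x y) : Nat.sqrt x.den ^ 2 = x.den := by
  obtain ⟨c, hc⟩ := Nat.exists_eq_sq_of_pow_three_eq_sq (den_pow_three_eq_den_sq hW h)
  rw [hc, Nat.sqrt_eq']

theorem den_dvd_den_nsmul {x₁ y₁ x y : ℚ} {h₁ : W.toAffine.Nonsingular x₁ y₁}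
    {h : W.toAffine.Nonsingular x y} (n : ℕ) (hn : n • Affine.Point.some _ _ h₁ = .some _ _ h) :
    x₁.den ∣ x.den := by
  refine (Nat.factorization_prime_le_iff_dvd x₁.den_nz x.den_nz).mp fun q hq => ?_
  have := Fact.mk hq
  rw [Nat.factorization_def _ hq, Nat.factorization_def _ hq, padicValNat_den, padicValNat_den]
  by_cases hneg : padicValRat q x₁ < 0
  · obtain ⟨k, hk, hx₁, -⟩ := (hW q hq).exists_padicValRat_eq h₁.1 (.inl hneg)
    have hP : InFiltration q k (Affine.Point.some _ _ h₁) := hx₁.le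
    have hx : padicValRat q x ≤ -(2 * k) := by
      simpa [hn, InFiltration] using hP.nsmul (hW q hq) hk n
    omega
  · omega

end Denominators

namespace EDS

variable (W : WeierstrassCurve ℤ)

lemma B_sq {P : (WQ W).toAffine.Point} {n : ℕ} (hn : n • P ≠ 0) :
    B W P n ^ 2 = (ptX W (n • P)).den := by
  rw [B, if_neg hn]
  generalize n • P = Q at hn ⊢
  rcases Q with _ | ⟨x, y, h⟩
  · exact absurd rfl hn
  · exact sqrt_den_sq (fun p _ => isPIntegral_baseChange W p) h.1

theorem B_one_dvd (P : (WQ W).toAffine.Point) (n : ℕ) : B W P 1 ∣ B W P n := by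
  by_cases hn : n • P = 0
  · simp [B, hn]
  rcases P with _ | ⟨x₁, y₁, h₁⟩
  · exact absurd (nsmul_zero n) hn
  have h1 : 1 • Affine.Point.some _ _ h₁ ≠ 0 := by
    rw [one_nsmul]
    exact Affine.Point.some_ne_zero h₁
  rw [← Nat.pow_dvd_pow_iff two_ne_zero, B_sq W h1, B_sq W hn, one_nsmul]
  generalize hQ : n • Affine.Point.some _ _ h₁ = Q at hn
  rcases Q with _ | ⟨x, y, h⟩
  · exact absurd rfl hn
  · exact den_dvd_den_nsmul (fun p _ => isPIntegral_baseChange W p) n hQ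

end EDS

theorem statement13_general (W : WeierstrassCurve ℤ)
    (P : (EDS.WQ W).toAffine.Point) :
    ∀ n : ℕ, EDS.B W P 1 ∣ EDS.B W P n ∧ ∃ z : ℤ, EDS.β W P n = (z : ℚ) := by
  intro n
  have hdvd := EDS.B_one_dvd W P n
  exact ⟨hdvd, exists_int_eq_sign_mul_div hdvd _⟩

/-- Let `E` be an elliptic curve over `ℚ` given by a Weierstrass equation with
integer coefficients and `P ∈ E(ℚ)`.  Then `B_1(E,P)` divides `B_n(E,P)` for every `n ∈ ℕ`;
in particular the sequence `β_n(E,P) = ±B_n(E,P)/B_1(E,P)` is a sequence of integers. -/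
theorem statement13 (W : WeierstrassCurve ℤ) (hΔ : (EDS.WQ W).Δ ≠ 0)
    (P : (EDS.WQ W).toAffine.Point) :
    ∀ n : ℕ, EDS.B W P 1 ∣ EDS.B W P n ∧ ∃ z : ℤ, EDS.β W P n = (z : ℚ) :=
  statement13_general W P
end
end
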